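/- For a well-founded finitely branching relation > on A, and for the product extension >_prod on lists over A of length k compared pointwise (each entry equal or decreasing, at least one strictly decreasing), the maximal descent length satisfies Slow_prod(a_1,...,a_k) = Slow(a_1) + ... + Slow(a_k). -/
import Mathlib


/-- Product extension of a relation `r` on `k`-tuples over `A`:
every component is equal or decreases, and at least one decreases strictly. -/
def ProdExt {A : Type*} (r : A → A → Prop) {k : ℕ} (a b : Fin k → A) : Prop :=
  (∀ i, a i = b i ∨ r (a i) (b i)) ∧ ∃ j, r (a j) (b j)

/-- `DescChain r a L` : `L` is a strictly `r`-descending chain starting from `a`. -/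
def DescChain {α : Type*} (r : α → α → Prop) : α → List α → Prop
  | _, [] => True
  | a, b :: l => r a b ∧ DescChain r b l

/-- `slow` assigns to each element the length of the longest `r`-descending
chain starting from it. -/
def IsMaxChainLen {α : Type*} (r : α → α → Prop) (slow : α → ℕ) : Prop :=
  ∀ a, (∃ L, DescChain r a L ∧ L.length = slow a) ∧ (∀ L, DescChain r a L → L.length ≤ slow a)

/-- A strict `r`-step strictly decreases `slow`. -/
lemma slow_lt_of_step {α : Type*} {r : α → α → Prop} {slow : α → ℕ}
    (h : IsMaxChainLen r slow) {x y : α} (hr : r x y) : slow y < slow x := by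
  obtain ⟨⟨L, hL, hlen⟩, _⟩ := h y
  have := (h x).2 (y :: L) ⟨hr, hL⟩
  simp [hlen] at this
  omega

/-- Upper bound: any product chain has length at most the sum of component `Slow`s. -/
lemma chain_le_sum {A : Type*} {r : A → A → Prop} {Slow : A → ℕ}
    (hSlow : IsMaxChainLen r Slow) {k : ℕ} :
    ∀ (L : List (Fin k → A)) (a : Fin k → A), DescChain (ProdExt r) a L →
      L.length ≤ ∑ i, Slow (a i) := by
  intro L
  induction L with
  | nil => intro a _; simp
  | cons b l ih =>
    intro a ⟨⟨hall, j, hj⟩, hchain⟩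
    have hle : ∀ i, Slow (b i) ≤ Slow (a i) := by
      intro i
      rcases hall i with h | h
      · rw [h]
      · exact (slow_lt_of_step hSlow h).le
    have hlt : Slow (b j) < Slow (a j) := slow_lt_of_step hSlow hj
    have hsum : ∑ i, Slow (b i) < ∑ i, Slow (a i) :=
      Finset.sum_lt_sum (fun i _ => hle i) ⟨j, Finset.mem_univ j, hlt⟩
    have := ih b hchain
    simpa using Nat.lt_of_le_of_lt this hsum

/-- Lower bound: there is a product chain of length the sum of component `Slow`s. -/
lemma exists_chain_of_sum {A : Type*} {r : A → A → Prop} {Slow : A → ℕ}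
    (hSlow : IsMaxChainLen r Slow) {k : ℕ} :
    ∀ (n : ℕ) (a : Fin k → A), ∑ i, Slow (a i) = n →
      ∃ L, DescChain (ProdExt r) a L ∧ L.length = n := by
  intro n
  induction n with
  | zero => intro a _; exact ⟨[], trivial, rfl⟩
  | succ m ih =>
    intro a hsum
    -- some component has positive Slow
    have hex : ∃ i : Fin k, 0 < Slow (a i) := by
      by_contra h
      push_neg at h
      have : ∑ i, Slow (a i) = 0 := Finset.sum_eq_zero (fun i _ => Nat.le_zero.mp (h i))
      omega
    obtain ⟨i, hi⟩ := hex
    obtain ⟨⟨L, hL, hlen⟩, _⟩ := hSlow (a i)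
    cases L with
    | nil => simp at hlen; omega
    | cons b l =>
      obtain ⟨hrb, hlb⟩ := hL
      have hb1 : Slow b < Slow (a i) := slow_lt_of_step hSlow hrb
      have hb2 : Slow (a i) - 1 ≤ Slow b := by
        have := (hSlow b).2 l hlb
        simp at hlen
        omega
      have hbeq : Slow b = Slow (a i) - 1 := by omega
      set a' := Function.update a i b with ha'
      have hstep : ProdExt r a a' := by
        refine ⟨fun j => ?_, ⟨i, by simp [ha', Function.update_self, hrb]⟩⟩
        by_cases hji : j = i
        · subst hji; right; simpa [ha'] using hrb
        · left; simp [ha', Function.update_of_ne hji]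
      have hsum' : ∑ j, Slow (a' j) = m := by
        have h1 : ∑ j, Slow (a' j) =
            Slow b + ∑ j ∈ Finset.univ.erase i, Slow (a j) := by
          rw [← Finset.add_sum_erase _ _ (Finset.mem_univ i)]
          congr 1
          · simp [ha']
          · exact Finset.sum_congr rfl (fun j hj =>
              by simp [ha', Function.update_of_ne (Finset.ne_of_mem_erase hj)])
        have h2 : ∑ j, Slow (a j) =
            Slow (a i) + ∑ j ∈ Finset.univ.erase i, Slow (a j) :=
          (Finset.add_sum_erase _ _ (Finset.mem_univ i)).symm
        omega
      obtain ⟨M, hM, hMlen⟩ := ih a' hsum'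
      exact ⟨a' :: M, ⟨hstep, hM⟩, by simp [hMlen]⟩

/-- For a well-founded finitely branching relation `r` on `A` and its product
extension on `k`-tuples, the maximal descent length of a tuple is the sum of
the maximal descent lengths of its components:
`Slow_prod(a₁,…,a_k) = Slow(a₁) + ⋯ + Slow(a_k)`. -/
theorem slowProd_eq_sum_slow {A : Type*} (r : A → A → Prop)
    (hwf : WellFounded (fun a b => r b a)) (hfb : ∀ a, {b | r a b}.Finite)
    (Slow : A → ℕ) (hSlow : IsMaxChainLen r Slow) (k : ℕ)
    (SlowProd : (Fin k → A) → ℕ) (hSlowProd : IsMaxChainLen (ProdExt r) SlowProd)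
    (a : Fin k → A) : SlowProd a = ∑ i, Slow (a i) := by
  apply le_antisymm
  · obtain ⟨⟨L, hL, hlen⟩, _⟩ := hSlowProd a
    rw [← hlen]
    exact chain_le_sum hSlow L a hL
  · obtain ⟨L, hL, hlen⟩ := exists_chain_of_sum hSlow (∑ i, Slow (a i)) a rfl
    rw [← hlen]
    exact (hSlowProd a).2 L hL
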